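/- arXiv:2110.06454 — 6 statements merged into one kernel-verified Lean document; each statement's English description precedes it below -/
import Mathlib

section
/- (Mη-Theorem) Fix X₂ ≠ 0, let X₁ be such that the power input P_I = T·J₂·X₂ is nonzero in a neighborhood of X₁ and the efficiency η = −(J₁·X₁)/(J₂·X₂) satisfies 1 + η ≠ 0 at X₁. If the derivative of the function X₁ ↦ η(X₁, X₂) vanishes at X₁, then the driven flux satisfies J₁ = −((1 − η)/(1 + η))·L₁₁·X₁ at that point. -/
/-- The driven flux `J₁ = L₁₁·X₁ + q·√(L₁₁·L₂₂)·X₂`. -/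
noncomputable def fluxJ1 (L11 L22 q X2 X1 : ℝ) : ℝ :=
  L11 * X1 + q * Real.sqrt (L11 * L22) * X2

/-- The conjugate flux `J₂ = q·√(L₁₁·L₂₂)·X₁ + L₂₂·X₂`. -/
noncomputable def fluxJ2 (L11 L22 q X2 X1 : ℝ) : ℝ :=
  q * Real.sqrt (L11 * L22) * X1 + L22 * X2

/-- The power input `P_I(X₁, X₂) = T·J₂·X₂`. -/
noncomputable def powerIn (T L11 L22 q X2 X1 : ℝ) : ℝ :=
  T * (fluxJ2 L11 L22 q X2 X1 * X2)

/-- The efficiency `η = −(J₁·X₁)/(J₂·X₂)`. -/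
noncomputable def eff (L11 L22 q X2 X1 : ℝ) : ℝ :=
  -(fluxJ1 L11 L22 q X2 X1 * X1) / (fluxJ2 L11 L22 q X2 X1 * X2)

/-!
The efficiency is the quotient `η = N/D` of `N(x) = -J₁(x)·x` and `D(x) = J₂(x)·X₂`, so at a
critical point `N'·D = N·D'` with `N' = -(L₁₁x + J₁)`. By reciprocity (`L₁₂ = L₂₁`) the slope
`D' = L₁₂X₂` equals `J₁ - L₁₁x`, so the critical-point equation reads
`(L₁₁x + J₁)·D = J₁x·(J₁ - L₁₁x)`. Substituting `J₁x = -η·D` and cancelling `D` leaves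
`L₁₁x + J₁ = -η·(J₁ - L₁₁x)`, that is `J₁·(1 + η) = -(1 - η)·L₁₁x`.
-/

theorem deriv_div_eq_zero_iff {𝕜 : Type*} [NontriviallyNormedField 𝕜] {f g : 𝕜 → 𝕜}
    {f' g' x : 𝕜} (hf : HasDerivAt f f' x) (hg : HasDerivAt g g' x) (hgx : g x ≠ 0) :
    deriv (f / g) x = 0 ↔ f' * g x = f x * g' := by
  rw [(hf.div hg hgx).deriv, div_eq_zero_iff, sub_eq_zero, or_iff_left (pow_ne_zero 2 hgx)]

theorem eq_neg_div_mul_of_stationary {J L x D η : ℝ} (hD : D ≠ 0) (hη : η = -(J * x) / D)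
    (hη1 : 1 + η ≠ 0) (hstat : (L * x + J) * D = J * x * (J - L * x)) :
    J = -((1 - η) / (1 + η)) * (L * x) := by
  have hJx : J * x = -(η * D) := by rw [hη]; field_simp
  have hcleared : J * (1 + η) = -((1 - η) * (L * x)) := by
    apply mul_left_cancel₀ hD
    linear_combination hstat + (J - L * x) * hJx
  field_simp
  linear_combination hcleared

section LinearConverter

variable (L11 L22 q X2 : ℝ)

theorem hasDerivAt_fluxJ1 (x : ℝ) : HasDerivAt (fluxJ1 L11 L22 q X2) L11 x := by
  unfold fluxJ1
  simpa using ((hasDerivAt_id x).const_mul L11).add_const (q * √(L11 * L22) * X2)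

theorem hasDerivAt_fluxJ2 (x : ℝ) :
    HasDerivAt (fluxJ2 L11 L22 q X2) (q * √(L11 * L22)) x := by
  unfold fluxJ2
  simpa using ((hasDerivAt_id x).const_mul (q * √(L11 * L22))).add_const (L22 * X2)

theorem fluxJ1_sub_mul_self (x : ℝ) :
    fluxJ1 L11 L22 q X2 x - L11 * x = q * √(L11 * L22) * X2 := by
  unfold fluxJ1; ring

end LinearConverter

theorem Meta_theorem_general (T L11 L22 q X1 X2 : ℝ)
    (hPI : ∀ᶠ y in nhds X1, powerIn T L11 L22 q X2 y ≠ 0)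
    (heta : 1 + eff L11 L22 q X2 X1 ≠ 0)
    (hder : deriv (fun y : ℝ => eff L11 L22 q X2 y) X1 = 0) :
    fluxJ1 L11 L22 q X2 X1 =
      -((1 - eff L11 L22 q X2 X1) / (1 + eff L11 L22 q X2 X1)) * (L11 * X1) := by
  have hD : fluxJ2 L11 L22 q X2 X1 * X2 ≠ 0 := right_ne_zero_of_mul hPI.self_of_nhds
  have hstat := (deriv_div_eq_zero_iff (f := fun y => -(fluxJ1 L11 L22 q X2 y * y))
    (((hasDerivAt_fluxJ1 L11 L22 q X2 X1).mul (hasDerivAt_id' X1)).neg)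
    ((hasDerivAt_fluxJ2 L11 L22 q X2 X1).mul_const X2) hD).mp hder
  refine eq_neg_div_mul_of_stationary hD rfl heta ?_
  rw [fluxJ1_sub_mul_self]
  linear_combination -hstat

/-- (Mη-Theorem) Fix `X₂ ≠ 0`; if the power input is nonzero in a neighborhood of `X₁`,
`1 + η ≠ 0` at `X₁`, and the derivative of `X₁ ↦ η(X₁, X₂)` vanishes at `X₁`, then the
driven flux satisfies `J₁ = −((1 − η)/(1 + η))·L₁₁·X₁` there. -/
theorem Meta_theorem (T L11 L22 q X1 X2 : ℝ) (hT : 0 < T) (hL11 : 0 < L11) (hL22 : 0 < L22)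
    (hX2 : X2 ≠ 0)
    (hPI : ∀ᶠ y in nhds X1, powerIn T L11 L22 q X2 y ≠ 0)
    (heta : 1 + eff L11 L22 q X2 X1 ≠ 0)
    (hder : deriv (fun y : ℝ => eff L11 L22 q X2 y) X1 = 0) :
    fluxJ1 L11 L22 q X2 X1 =
      -((1 - eff L11 L22 q X2 X1) / (1 + eff L11 L22 q X2 X1)) * (L11 * X1) :=
  Meta_theorem_general T L11 L22 q X1 X2 hPI heta hder
end

section
/- (Mη-Corollary) Assume 0 < q < 1, X₂ > 0, X₁ < 0, the force ratio x = √(L₁₁/L₂₂)·X₁/X₂ satisfies q·x + 1 > 0, and the driven flux satisfies J₁ = −((1 − η)/(1 + η))·L₁₁·X₁ where η = −(J₁·X₁)/(J₂·X₂). Then x = −q/(1 + √(1 − q²)). -/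
/-!
Writing `x` for the force ratio, both fluxes factor as `J₁ ∝ x + q` and `J₂ ∝ q x + 1`, so
`η = -x (x + q) / (q x + 1)`. Substituting this into the flux condition and clearing denominators
leaves the quadratic `q x² + 2 x + q = 0`, i.e. `(q x + 1)² = 1 - q²`; the sign condition
`q x + 1 > 0` picks the root `q x + 1 = √(1 - q²)`, which rearranges to the claimed value.
-/

open Real

noncomputable def forceRatio (L11 L22 X1 X2 : ℝ) : ℝ :=
  √(L11 / L22) * X1 / X2

lemma sqrt_mul_eq_mul_sqrt_div (a : ℝ) {b : ℝ} (hb : 0 < b) : √(a * b) = b * √(a / b) := by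
  rw [← sqrt_sq hb.le, ← sqrt_mul (sq_nonneg b), sqrt_sq hb.le]
  congr 1
  field_simp

lemma sqrt_mul_mul_sqrt_div {a b : ℝ} (ha : 0 ≤ a) (hb : 0 < b) : √(a * b) * √(a / b) = a := by
  rw [sqrt_mul_eq_mul_sqrt_div a hb, mul_assoc, mul_self_sqrt (by positivity)]
  field_simp

section ForceRatio

variable {L11 L22 q X1 X2 : ℝ}

lemma mul_eq_mul_forceRatio (hL11 : 0 ≤ L11) (hL22 : 0 < L22) (hX2 : X2 ≠ 0) :
    L11 * X1 = √(L11 * L22) * X2 * forceRatio L11 L22 X1 X2 := by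
  conv_lhs => rw [← sqrt_mul_mul_sqrt_div hL11 hL22]
  rw [forceRatio]
  field_simp

lemma sqrt_mul_mul_eq_mul_forceRatio (hL22 : 0 < L22) (hX2 : X2 ≠ 0) :
    √(L11 * L22) * X1 = L22 * X2 * forceRatio L11 L22 X1 X2 := by
  rw [sqrt_mul_eq_mul_sqrt_div L11 hL22, forceRatio]
  field_simp

lemma fluxJ1_eq_forceRatio (hL11 : 0 ≤ L11) (hL22 : 0 < L22) (hX2 : X2 ≠ 0) :
    fluxJ1 L11 L22 q X2 X1 = √(L11 * L22) * X2 * (forceRatio L11 L22 X1 X2 + q) := by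
  rw [fluxJ1, mul_eq_mul_forceRatio hL11 hL22 hX2]
  ring

lemma fluxJ2_eq_forceRatio (hL22 : 0 < L22) (hX2 : X2 ≠ 0) :
    fluxJ2 L11 L22 q X2 X1 = L22 * X2 * (q * forceRatio L11 L22 X1 X2 + 1) := by
  rw [fluxJ2, mul_assoc q, sqrt_mul_mul_eq_mul_forceRatio hL22 hX2]
  ring

lemma eff_eq_forceRatio (hL11 : 0 ≤ L11) (hL22 : 0 < L22) (hX2 : X2 ≠ 0) :
    eff L11 L22 q X2 X1 =
      -(forceRatio L11 L22 X1 X2 * (forceRatio L11 L22 X1 X2 + q)) /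
        (q * forceRatio L11 L22 X1 X2 + 1) := by
  have houtput : fluxJ1 L11 L22 q X2 X1 * X1 =
      L22 * X2 ^ 2 * (forceRatio L11 L22 X1 X2 * (forceRatio L11 L22 X1 X2 + q)) := by
    rw [fluxJ1_eq_forceRatio hL11 hL22 hX2]
    linear_combination
      X2 * (forceRatio L11 L22 X1 X2 + q) * sqrt_mul_mul_eq_mul_forceRatio (L11 := L11) hL22 hX2
  have hinput : fluxJ2 L11 L22 q X2 X1 * X2 =
      L22 * X2 ^ 2 * (q * forceRatio L11 L22 X1 X2 + 1) := by
    rw [fluxJ2_eq_forceRatio hL22 hX2]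
    ring
  rw [eff, houtput, hinput, ← mul_neg, mul_div_mul_left _ _ (by positivity)]

end ForceRatio

lemma sq_add_two_mul_add_eq_zero_of_flux_condition {q x η : ℝ} (hqx : q * x + 1 ≠ 0)
    (hη : η = -(x * (x + q)) / (q * x + 1)) (h : x + q = -((1 - η) / (1 + η)) * x) :
    q * x ^ 2 + 2 * x + q = 0 := by
  have hηmul : η * (q * x + 1) = -(x * (x + q)) := by
    rw [hη]
    exact div_mul_cancel₀ _ hqx
  obtain hdeg | hη1 := eq_or_ne (1 + η) 0
  · -- the junk value `(1 - η) / 0 = 0` forces `x = -q`, hence `η = 0`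
    rw [hdeg, div_zero, neg_zero, zero_mul, add_eq_zero_iff_eq_neg] at h
    rw [h, neg_add_cancel, mul_zero, neg_zero, zero_div] at hη
    norm_num [hη] at hdeg
  · have hlinear : 2 * x + q + q * η = 0 := by
      field_simp at h
      linear_combination h
    linear_combination (q * x + 1) * hlinear - q * hηmul

lemma eq_neg_div_one_add_sqrt_of_quadratic {q x : ℝ} (hqx : 0 < q * x + 1)
    (h : q * x ^ 2 + 2 * x + q = 0) : x = -q / (1 + √(1 - q ^ 2)) := by
  have hroot : √(1 - q ^ 2) = q * x + 1 := by
    rw [← sqrt_sq hqx.le]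
    congr 1
    linear_combination -q * h
  rw [hroot, eq_div_iff (by linarith)]
  linear_combination h

theorem Meta_corollary_general (L11 L22 q X1 X2 : ℝ) (hL11 : 0 < L11) (hL22 : 0 < L22)
    (hX2 : 0 < X2)
    (hx : q * (Real.sqrt (L11 / L22) * X1 / X2) + 1 > 0)
    (hJ1 : fluxJ1 L11 L22 q X2 X1 =
      -((1 - eff L11 L22 q X2 X1) / (1 + eff L11 L22 q X2 X1)) * (L11 * X1)) :
    Real.sqrt (L11 / L22) * X1 / X2 = -q / (1 + Real.sqrt (1 - q ^ 2)) := by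
  change forceRatio L11 L22 X1 X2 = _
  change q * forceRatio L11 L22 X1 X2 + 1 > 0 at hx
  have hscale : √(L11 * L22) * X2 ≠ 0 := by positivity
  rw [fluxJ1_eq_forceRatio hL11.le hL22 hX2.ne',
    mul_eq_mul_forceRatio (X1 := X1) hL11.le hL22 hX2.ne'] at hJ1
  refine eq_neg_div_one_add_sqrt_of_quadratic hx
    (sq_add_two_mul_add_eq_zero_of_flux_condition hx.ne'
      (eff_eq_forceRatio hL11.le hL22 hX2.ne') (mul_left_cancel₀ hscale ?_))
  linear_combination hJ1

/-- (Mη-Corollary) If `0 < q < 1`, `X₂ > 0`, `X₁ < 0`, the force ratio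
`x = √(L₁₁/L₂₂)·X₁/X₂` satisfies `q·x + 1 > 0`, and the driven flux satisfies
`J₁ = −((1 − η)/(1 + η))·L₁₁·X₁`, then `x = −q/(1 + √(1 − q²))`. -/
theorem Meta_corollary (L11 L22 q X1 X2 : ℝ) (hL11 : 0 < L11) (hL22 : 0 < L22)
    (hq0 : 0 < q) (hq1 : q < 1) (hX2 : 0 < X2) (hX1 : X1 < 0)
    (hx : q * (Real.sqrt (L11 / L22) * X1 / X2) + 1 > 0)
    (hJ1 : fluxJ1 L11 L22 q X2 X1 =
      -((1 - eff L11 L22 q X2 X1) / (1 + eff L11 L22 q X2 X1)) * (L11 * X1)) :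
    Real.sqrt (L11 / L22) * X1 / X2 = -q / (1 + Real.sqrt (1 - q ^ 2)) :=
  Meta_corollary_general L11 L22 q X1 X2 hL11 hL22 hX2 hx hJ1
end

section
/- (MΩ-Corollary) Let 0 < q < 1, X₂ ≠ 0, and let η_M = q²/(1 + √(1 − q²))². If the driven flux satisfies J₁ = −((2 − η_M)/(2 + η_M))·L₁₁·X₁, then the force ratio x = √(L₁₁/L₂₂)·X₁/X₂ equals −q·(4 − q² + 4·√(1 − q²))/(4·(1 + √(1 − q²))²). -/
/-- The maximum efficiency `η_M = q²/(1 + √(1 − q²))²`. -/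
noncomputable def etaM (q : ℝ) : ℝ := q ^ 2 / (1 + Real.sqrt (1 - q ^ 2)) ^ 2

/-!
The flux condition `J₁ = -c·L₁₁·X₁` is linear in `X₁`, so it reads
`(1 + c)·L₁₁·X₁ = -q·√(L₁₁L₂₂)·X₂`; since `√(L₁₁/L₂₂)·√(L₁₁L₂₂) = L₁₁`, this says `x = -q/(1 + c)`.
For `c = (2 - η_M)/(2 + η_M)` one gets `x = -q·(2 + η_M)/4`, and `(1 - q²) = s²` with
`s = √(1 - q²)` turns `2(1 + s)² + q²` into `4 - q² + 4s`.
-/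

lemma Real.sqrt_div_mul_sqrt_mul {a b : ℝ} (ha : 0 ≤ a) (hb : 0 < b) :
    Real.sqrt (a / b) * Real.sqrt (a * b) = a := by
  rw [← Real.sqrt_mul (by positivity), show a / b * (a * b) = a ^ 2 by field_simp,
    Real.sqrt_sq ha]

lemma forceRatio_eq_of_fluxJ1_eq_neg_mul {L11 L22 q X1 X2 c : ℝ} (hL11 : 0 < L11)
    (hL22 : 0 < L22) (hX2 : X2 ≠ 0) (hc : 1 + c ≠ 0)
    (hJ1 : fluxJ1 L11 L22 q X2 X1 = -c * (L11 * X1)) :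
    Real.sqrt (L11 / L22) * X1 / X2 = -q / (1 + c) := by
  have hsqrt := Real.sqrt_div_mul_sqrt_mul hL11.le hL22
  have hbalance : (1 + c) * (L11 * X1) = -(q * Real.sqrt (L11 * L22) * X2) := by
    unfold fluxJ1 at hJ1
    linear_combination hJ1
  rw [div_eq_div_iff hX2 hc]
  refine mul_left_cancel₀ hL11.ne' ?_
  linear_combination Real.sqrt (L11 / L22) * hbalance - q * X2 * hsqrt

lemma one_add_two_sub_div_two_add {η : ℝ} (hη : 2 + η ≠ 0) :
    1 + (2 - η) / (2 + η) = 4 / (2 + η) := by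
  field_simp
  ring

lemma two_add_etaM {q : ℝ} (hq : q ^ 2 ≤ 1) :
    2 + etaM q = (4 - q ^ 2 + 4 * Real.sqrt (1 - q ^ 2)) / (1 + Real.sqrt (1 - q ^ 2)) ^ 2 := by
  have hs : Real.sqrt (1 - q ^ 2) ^ 2 = 1 - q ^ 2 := Real.sq_sqrt (by linarith)
  have hpos : 0 < 1 + Real.sqrt (1 - q ^ 2) := by positivity
  unfold etaM
  field_simp
  linear_combination 2 * hs

theorem MOmega_corollary_general (L11 L22 q X1 X2 : ℝ) (hL11 : 0 < L11)
    (hL22 : 0 < L22) (hq0 : 0 < q) (hq1 : q < 1) (hX2 : X2 ≠ 0)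
    (hJ1 : fluxJ1 L11 L22 q X2 X1 = -((2 - etaM q) / (2 + etaM q)) * (L11 * X1)) :
    Real.sqrt (L11 / L22) * X1 / X2 =
      -(q * (4 - q ^ 2 + 4 * Real.sqrt (1 - q ^ 2))) /
        (4 * (1 + Real.sqrt (1 - q ^ 2)) ^ 2) := by
  have hq : q ^ 2 ≤ 1 := by nlinarith
  have hη : 0 < 2 + etaM q := by
    have : 0 ≤ etaM q := by unfold etaM; positivity
    linarith
  have hc : 1 + (2 - etaM q) / (2 + etaM q) ≠ 0 := by
    rw [one_add_two_sub_div_two_add hη.ne']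
    exact div_ne_zero four_ne_zero hη.ne'
  rw [forceRatio_eq_of_fluxJ1_eq_neg_mul hL11 hL22 hX2 hc hJ1, one_add_two_sub_div_two_add hη.ne',
    two_add_etaM hq]
  field_simp

/-- (MΩ-Corollary) Let `0 < q < 1`, `X₂ ≠ 0`. If the driven flux satisfies
`J₁ = −((2 − η_M)/(2 + η_M))·L₁₁·X₁`, then the force ratio `x = √(L₁₁/L₂₂)·X₁/X₂`
equals `−q·(4 − q² + 4·√(1 − q²))/(4·(1 + √(1 − q²))²)`. -/
theorem MOmega_corollary (T L11 L22 q X1 X2 : ℝ) (hT : 0 < T) (hL11 : 0 < L11)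
    (hL22 : 0 < L22) (hq0 : 0 < q) (hq1 : q < 1) (hX2 : X2 ≠ 0)
    (hJ1 : fluxJ1 L11 L22 q X2 X1 = -((2 - etaM q) / (2 + etaM q)) * (L11 * X1)) :
    Real.sqrt (L11 / L22) * X1 / X2 =
      -(q * (4 - q ^ 2 + 4 * Real.sqrt (1 - q ^ 2))) /
        (4 * (1 + Real.sqrt (1 - q ^ 2)) ^ 2) :=
  MOmega_corollary_general L11 L22 q X1 X2 hL11 hL22 hq0 hq1 hX2 hJ1
end

section
/- (MPη-Theorem) Fix X₂ ≠ 0, let X₁ be such that the power input P_I = T·J₂·X₂ is nonzero in a neighborhood of X₁, the power output P_O = −T·J₁·X₁ is nonzero at X₁, and the efficiency η = −(J₁·X₁)/(J₂·X₂) satisfies 2 + η ≠ 0 at X₁. If the derivative of the efficient power X₁ ↦ P_η(X₁, X₂) = η·P_O vanishes at X₁, then the driven flux satisfies J₁ = −((2 − η)/(2 + η))·L₁₁·X₁ at that point. -/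
/-- The power output `P_O(X₁, X₂) = −T·J₁·X₁`. -/
noncomputable def powerOut (T L11 L22 q X2 X1 : ℝ) : ℝ :=
  -(T * (fluxJ1 L11 L22 q X2 X1 * X1))

/-- The efficient power `P_η = η·P_O`. -/
noncomputable def effPower (T L11 L22 q X2 X1 : ℝ) : ℝ :=
  eff L11 L22 q X2 X1 * powerOut T L11 L22 q X2 X1

/- Since `η = P_O / P_I`, the efficient power is `P_η = P_O² / P_I`. Stationarity of a quotient
`f² / g` with `f ≠ 0` reads `2 f' g = f g'`, i.e. `2 P_O' = η P_I'`. For the linear fluxes,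
`P_O' = -T (J₁ + L₁₁ X₁)` and `P_I' = T (J₁ - L₁₁ X₁)`, so `2 (J₁ + L₁₁ X₁) + η (J₁ - L₁₁ X₁) = 0`,
which is solved for `J₁` using `2 + η ≠ 0`. -/

theorem two_mul_mul_eq_of_deriv_sq_div_eq_zero {𝕜 : Type*} [NontriviallyNormedField 𝕜]
    {f g : 𝕜 → 𝕜} {f' g' x : 𝕜} (hf : HasDerivAt f f' x) (hg : HasDerivAt g g' x)
    (hfx : f x ≠ 0) (hgx : g x ≠ 0) (h : deriv (fun y => f y ^ 2 / g y) x = 0) :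
    2 * f' * g x = f x * g' := by
  have hquot : HasDerivAt (fun y => f y ^ 2 / g y) _ x := (hf.pow 2).div hg hgx
  rw [hquot.deriv, div_eq_zero_iff, or_iff_left (pow_ne_zero 2 hgx)] at h
  simp only [Pi.pow_apply, Nat.cast_ofNat, Nat.add_one_sub_one, pow_one] at h
  apply mul_left_cancel₀ hfx
  linear_combination h

theorem fluxJ1_sub_mul (L11 L22 q X2 X1 : ℝ) :
    fluxJ1 L11 L22 q X2 X1 - L11 * X1 = q * Real.sqrt (L11 * L22) * X2 := by
  simp only [fluxJ1]; ring

theorem hasDerivAt_powerOut (T L11 L22 q X2 X1 : ℝ) :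
    HasDerivAt (powerOut T L11 L22 q X2) (-T * (fluxJ1 L11 L22 q X2 X1 + L11 * X1)) X1 := by
  have h : HasDerivAt (powerOut T L11 L22 q X2) _ X1 :=
    ((((hasDerivAt_id X1).const_mul L11).add_const (q * Real.sqrt (L11 * L22) * X2)).mul
      (hasDerivAt_id X1)).const_mul T |>.neg
  exact h.congr_deriv (by simp only [fluxJ1, id]; ring)

theorem hasDerivAt_powerIn (T L11 L22 q X2 X1 : ℝ) :
    HasDerivAt (powerIn T L11 L22 q X2) (T * (fluxJ1 L11 L22 q X2 X1 - L11 * X1)) X1 := by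
  have h : HasDerivAt (powerIn T L11 L22 q X2) _ X1 :=
    ((((hasDerivAt_id X1).const_mul (q * Real.sqrt (L11 * L22))).add_const
      (L22 * X2)).mul_const X2).const_mul T
  exact h.congr_deriv (by rw [fluxJ1_sub_mul]; ring)

theorem eff_eq_powerOut_div_powerIn {T : ℝ} (hT : T ≠ 0) (L11 L22 q X2 X1 : ℝ) :
    eff L11 L22 q X2 X1 = powerOut T L11 L22 q X2 X1 / powerIn T L11 L22 q X2 X1 := by
  simp only [eff, powerOut, powerIn]
  rw [neg_div, neg_div, mul_div_mul_left _ _ hT]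

theorem effPower_eq_powerOut_sq_div_powerIn (T L11 L22 q X2 X1 : ℝ) :
    effPower T L11 L22 q X2 X1 = powerOut T L11 L22 q X2 X1 ^ 2 / powerIn T L11 L22 q X2 X1 := by
  rcases eq_or_ne T 0 with rfl | hT
  · simp [effPower, powerOut, powerIn]
  · rw [effPower, eff_eq_powerOut_div_powerIn hT]; ring

theorem MPeta_theorem_general (T L11 L22 q X1 X2 : ℝ)
    (hPI : ∀ᶠ y in nhds X1, powerIn T L11 L22 q X2 y ≠ 0)
    (hPO : powerOut T L11 L22 q X2 X1 ≠ 0)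
    (heta : 2 + eff L11 L22 q X2 X1 ≠ 0)
    (hder : deriv (fun y : ℝ => effPower T L11 L22 q X2 y) X1 = 0) :
    fluxJ1 L11 L22 q X2 X1 =
      -((2 - eff L11 L22 q X2 X1) / (2 + eff L11 L22 q X2 X1)) * (L11 * X1) := by
  have hT : T ≠ 0 := by rintro rfl; simp [powerOut] at hPO
  have hPI_X1 : powerIn T L11 L22 q X2 X1 ≠ 0 := hPI.self_of_nhds
  simp only [effPower_eq_powerOut_sq_div_powerIn] at hder
  have hstat := two_mul_mul_eq_of_deriv_sq_div_eq_zero (hasDerivAt_powerOut T L11 L22 q X2 X1)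
    (hasDerivAt_powerIn T L11 L22 q X2 X1) hPO hPI_X1 hder
  have hlin : 2 * (fluxJ1 L11 L22 q X2 X1 + L11 * X1)
      + eff L11 L22 q X2 X1 * (fluxJ1 L11 L22 q X2 X1 - L11 * X1) = 0 := by
    rw [eff_eq_powerOut_div_powerIn hT]
    field_simp
    apply mul_left_cancel₀ hT
    linear_combination -hstat
  field_simp
  linear_combination hlin

/-- (MPη-Theorem) Fix `X₂ ≠ 0`; if the power input is nonzero in a neighborhood of `X₁`,
the power output is nonzero at `X₁`, `2 + η ≠ 0` at `X₁`, and the derivative of the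
efficient power `X₁ ↦ P_η(X₁, X₂)` vanishes at `X₁`, then the driven flux satisfies
`J₁ = −((2 − η)/(2 + η))·L₁₁·X₁` there. -/
theorem MPeta_theorem (T L11 L22 q X1 X2 : ℝ) (hT : 0 < T) (hL11 : 0 < L11) (hL22 : 0 < L22)
    (hX2 : X2 ≠ 0)
    (hPI : ∀ᶠ y in nhds X1, powerIn T L11 L22 q X2 y ≠ 0)
    (hPO : powerOut T L11 L22 q X2 X1 ≠ 0)
    (heta : 2 + eff L11 L22 q X2 X1 ≠ 0)
    (hder : deriv (fun y : ℝ => effPower T L11 L22 q X2 y) X1 = 0) :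
    fluxJ1 L11 L22 q X2 X1 =
      -((2 - eff L11 L22 q X2 X1) / (2 + eff L11 L22 q X2 X1)) * (L11 * X1) :=
  MPeta_theorem_general T L11 L22 q X1 X2 hPI hPO heta hder
end

section
/- (Dissipation hierarchy, Eq. 7a) Let T > 0, L₂₂ > 0, X₂ ≠ 0 and let q satisfy 2√2/3 < q < 1. Then the reduced dissipation function Φ(x) = T·L₂₂·X₂²·(x² + 2qx + 1), evaluated at the six optimal force ratios, satisfies the strict chain Φ(x_mdf) < Φ(x_Mη) < Φ(x_MEF) < Φ(x_MΩ) < Φ(x_MPη) < Φ(x_MPO). -/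
/-- Optimal force ratio for minimum dissipation function: `x_mdf = −q`. -/
noncomputable def xmdf (q : ℝ) : ℝ := -q

/-- Optimal force ratio for maximum power output: `x_MPO = −q/2`. -/
noncomputable def xMPO (q : ℝ) : ℝ := -q / 2

/-- Optimal force ratio for maximum efficiency: `x_Mη = −q/(1 + √(1 − q²))`. -/
noncomputable def xMeta (q : ℝ) : ℝ := -q / (1 + Real.sqrt (1 - q ^ 2))

/-- Optimal force ratio for maximum ecological function: `x_MEF = −3q/4`. -/
noncomputable def xMEF (q : ℝ) : ℝ := -(3 * q) / 4

/-- Optimal force ratio for maximum omega function: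
`x_MΩ = −q·(4 − q² + 4√(1 − q²))/(4·(1 + √(1 − q²))²)`. -/
noncomputable def xMOmega (q : ℝ) : ℝ :=
  -(q * (4 - q ^ 2 + 4 * Real.sqrt (1 - q ^ 2))) / (4 * (1 + Real.sqrt (1 - q ^ 2)) ^ 2)

/-- Optimal force ratio for maximum efficient power:
`x_MPη = −(4 + q² − √(16 − 16q² + q⁴))/(6q)`. -/
noncomputable def xMPeta (q : ℝ) : ℝ :=
  -(4 + q ^ 2 - Real.sqrt (16 - 16 * q ^ 2 + q ^ 4)) / (6 * q)

/-- Reduced dissipation function `Φ(x) = T·L₂₂·X₂²·(x² + 2qx + 1)`. -/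
noncomputable def dissipX (T L22 X2 q x : ℝ) : ℝ :=
  T * L22 * X2 ^ 2 * (x ^ 2 + 2 * q * x + 1)

/-! Completing the square, `Φ(x) = T L₂₂ X₂² ((x + q)² + 1 − q²)` is strictly increasing to the
right of its minimiser `x_mdf = −q`, so the hierarchy is the ordering
`x_mdf < x_Mη < x_MEF < x_MΩ < x_MPη < x_MPO` of the force ratios. With `s = √(1 − q²)`, only
`x_Mη < x_MEF` depends on the bound on `q` (it says `s < 1/3`); the others hold for all
`0 < q < 1`, the delicate one `x_MΩ < x_MPη` resting on
`4 (s⁴ + 14 s² + 1) − (1 + 6 s + s²)² = 3 (1 − s)⁴`. -/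

theorem dissipX_eq (T L22 X2 q x : ℝ) :
    dissipX T L22 X2 q x = T * L22 * X2 ^ 2 * ((x + q) ^ 2 + (1 - q ^ 2)) := by
  unfold dissipX; ring

theorem strictMonoOn_dissipX {T L22 X2 : ℝ} (hT : 0 < T) (hL22 : 0 < L22) (hX2 : X2 ≠ 0)
    (q : ℝ) : StrictMonoOn (dissipX T L22 X2 q) (Set.Ici (xmdf q)) := by
  intro a ha b _ hab
  rw [Set.mem_Ici, xmdf] at ha
  have hsq : (a + q) ^ 2 < (b + q) ^ 2 := pow_lt_pow_left₀ (by linarith) (by linarith) two_ne_zero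
  simp only [dissipX_eq]
  gcongr

section ForceRatios

variable {q : ℝ}

theorem xmdf_lt_xMeta (hq0 : 0 < q) (hq1 : q < 1) : xmdf q < xMeta q := by
  have hs : 0 < √(1 - q ^ 2) := Real.sqrt_pos.2 (by nlinarith)
  rw [xmdf, xMeta, lt_div_iff₀ (by positivity)]
  nlinarith

theorem xMeta_lt_xMEF (hq : 2 * √2 / 3 < q) : xMeta q < xMEF q := by
  have hq0 : 0 < q := lt_of_le_of_lt (by positivity) hq
  have hs : √(1 - q ^ 2) < 1 / 3 := by
    rw [Real.sqrt_lt' (by norm_num)]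
    have h2 : √2 ^ 2 = 2 := Real.sq_sqrt (by norm_num)
    nlinarith [Real.sqrt_nonneg 2]
  rw [xMeta, xMEF, div_lt_div_iff₀ (by positivity) (by norm_num)]
  nlinarith

theorem xMEF_lt_xMOmega (hq0 : 0 < q) (hq1 : q < 1) : xMEF q < xMOmega q := by
  set s := √(1 - q ^ 2)
  have hs : 0 < s := Real.sqrt_pos.2 (by nlinarith)
  have hs2 : s ^ 2 = 1 - q ^ 2 := Real.sq_sqrt (by nlinarith)
  rw [xMEF, xMOmega, div_lt_div_iff₀ (by norm_num) (by positivity)]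
  nlinarith [mul_pos hq0 hs]

theorem one_add_six_mul_add_sq_lt_two_mul_sqrt {s : ℝ} (hs0 : 0 ≤ s) (hs1 : s ≠ 1) :
    1 + 6 * s + s ^ 2 < 2 * √(s ^ 4 + 14 * s ^ 2 + 1) := by
  have h : (1 + 6 * s + s ^ 2) / 2 < √(s ^ 4 + 14 * s ^ 2 + 1) := by
    rw [Real.lt_sqrt (by positivity)]
    have : 0 < (1 - s) ^ 4 := by positivity [sub_ne_zero.2 hs1.symm]
    nlinarith
  linarith

theorem xMOmega_lt_xMPeta (hq0 : 0 < q) (hq1 : q < 1) : xMOmega q < xMPeta q := by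
  set s := √(1 - q ^ 2)
  have hs : 0 < s := Real.sqrt_pos.2 (by nlinarith)
  have hs2 : s ^ 2 = 1 - q ^ 2 := Real.sq_sqrt (by nlinarith)
  have hr : √(16 - 16 * q ^ 2 + q ^ 4) = √(s ^ 4 + 14 * s ^ 2 + 1) := by
    congr 1; rw [show s ^ 4 = (s ^ 2) ^ 2 by ring, hs2]; ring
  have key := one_add_six_mul_add_sq_lt_two_mul_sqrt hs.le (by nlinarith)
  rw [xMOmega, xMPeta, hr, div_lt_div_iff₀ (by positivity) (by positivity)]
  nlinarith [pow_pos (show 0 < 1 + s by linarith) 2]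

theorem xMPeta_lt_xMPO (hq0 : 0 < q) (hq1 : q < 1) : xMPeta q < xMPO q := by
  have hr : √(16 - 16 * q ^ 2 + q ^ 4) < 4 - 2 * q ^ 2 := by
    rw [Real.sqrt_lt' (by nlinarith)]
    nlinarith [pow_pos hq0 4]
  rw [xMPeta, xMPO, div_lt_div_iff₀ (by positivity) (by norm_num)]
  nlinarith

end ForceRatios

/-- (Dissipation hierarchy, Eq. 7a) For `2√2/3 < q < 1`, the reduced dissipation function
evaluated at the six optimal force ratios satisfies
`Φ(x_mdf) < Φ(x_Mη) < Φ(x_MEF) < Φ(x_MΩ) < Φ(x_MPη) < Φ(x_MPO)`. -/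
theorem dissipation_hierarchy (T L22 X2 q : ℝ) (hT : 0 < T) (hL22 : 0 < L22)
    (hX2 : X2 ≠ 0) (hq0 : 2 * Real.sqrt 2 / 3 < q) (hq1 : q < 1) :
    dissipX T L22 X2 q (xmdf q) < dissipX T L22 X2 q (xMeta q) ∧
    dissipX T L22 X2 q (xMeta q) < dissipX T L22 X2 q (xMEF q) ∧
    dissipX T L22 X2 q (xMEF q) < dissipX T L22 X2 q (xMOmega q) ∧
    dissipX T L22 X2 q (xMOmega q) < dissipX T L22 X2 q (xMPeta q) ∧
    dissipX T L22 X2 q (xMPeta q) < dissipX T L22 X2 q (xMPO q) := by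
  have hq : 0 < q := lt_of_le_of_lt (by positivity) hq0
  have h1 := xmdf_lt_xMeta hq hq1
  have h2 := xMeta_lt_xMEF hq0
  have h3 := xMEF_lt_xMOmega hq hq1
  have h4 := xMOmega_lt_xMPeta hq hq1
  have h5 := xMPeta_lt_xMPO hq hq1
  have hΦ := strictMonoOn_dissipX hT hL22 hX2 q
  refine ⟨hΦ Set.self_mem_Ici h1.le h1, hΦ h1.le ?_ h2, hΦ ?_ ?_ h3, hΦ ?_ ?_ h4, hΦ ?_ ?_ h5⟩ <;>
    rw [Set.mem_Ici] <;> linarith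
end

section
/- (Maximum efficiency value) Let 0 < q < 1 and consider the efficiency η(x) = −x(x + q)/(q·x + 1) on the interval −1 < x < 0. Then η attains its maximum on this interval exactly at x = −q/(1 + √(1 − q²)), and the maximum value is η_M = q²/(1 + √(1 − q²))². -/
/-!
Write `s = √(1 - q²)`, so that `q² + s² = 1`. Then for `q x + 1 > 0`
`η(x) = q² / (1 + s)² - ((1 + s) x + q)² / ((1 + s)² (q x + 1))`,
because `q² (q x + 1) + x (x + q) (1 + s)² = ((1 + s) x + q)²` once `s² = 1 - q²`.
The subtracted term is nonnegative and vanishes only at `x = -q / (1 + s)`.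
-/

/-- Reduced efficiency `η(x) = −x(x + q)/(q·x + 1)`. -/
noncomputable def effX (q x : ℝ) : ℝ := -(x * (x + q)) / (q * x + 1)

section

variable {q s : ℝ}

theorem sq_mul_add_mul_sq_eq_sq (hs : q ^ 2 + s ^ 2 = 1) (x : ℝ) :
    q ^ 2 * (q * x + 1) + x * (x + q) * (1 + s) ^ 2 = ((1 + s) * x + q) ^ 2 := by
  linear_combination (q * x) * hs

theorem effX_eq_sub_div (hs : q ^ 2 + s ^ 2 = 1) (h1s : 1 + s ≠ 0) {x : ℝ}
    (hx : q * x + 1 ≠ 0) :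
    effX q x = q ^ 2 / (1 + s) ^ 2 - ((1 + s) * x + q) ^ 2 / ((1 + s) ^ 2 * (q * x + 1)) := by
  rw [effX, div_sub_div _ _ (by positivity) (by positivity), ← sq_mul_add_mul_sq_eq_sq hs x]
  field_simp
  ring

theorem mul_neg_div_one_add_add_one (hs : q ^ 2 + s ^ 2 = 1) (h1s : 1 + s ≠ 0) :
    q * (-q / (1 + s)) + 1 = s := by
  field_simp
  linear_combination -hs

theorem effX_neg_div_one_add (hs : q ^ 2 + s ^ 2 = 1) (h1s : 1 + s ≠ 0) (hs0 : s ≠ 0) :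
    effX q (-q / (1 + s)) = q ^ 2 / (1 + s) ^ 2 := by
  have hx : q * (-q / (1 + s)) + 1 ≠ 0 := by rwa [mul_neg_div_one_add_add_one hs h1s]
  rw [effX_eq_sub_div hs h1s hx, mul_div_cancel₀ _ h1s]
  simp

theorem effX_lt_of_ne (hs : q ^ 2 + s ^ 2 = 1) (h1s : 1 + s ≠ 0) {x : ℝ}
    (hx : 0 < q * x + 1) (hne : x ≠ -q / (1 + s)) :
    effX q x < q ^ 2 / (1 + s) ^ 2 := by
  have hlin : (1 + s) * x + q ≠ 0 := fun h ↦ hne (by field_simp; linarith)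
  rw [effX_eq_sub_div hs h1s hx.ne', sub_lt_self_iff]
  positivity

end

theorem neg_div_one_add_mem_Ioo {q s : ℝ} (hq0 : 0 < q) (hq1 : q < 1) (hs0 : 0 ≤ s) :
    -q / (1 + s) ∈ Set.Ioo (-1 : ℝ) 0 := by
  constructor
  · rw [lt_div_iff₀ (by positivity)]
    linarith
  · exact div_neg_of_neg_of_pos (neg_neg_of_pos hq0) (by positivity)

/-- (Maximum efficiency value) For `0 < q < 1`, the efficiency `η(x) = −x(x + q)/(q·x + 1)`
on the interval `−1 < x < 0` attains its maximum exactly at `x_Mη = −q/(1 + √(1 − q²))`,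
and the maximum value is `η_M = q²/(1 + √(1 − q²))²`. -/
theorem maximum_efficiency (q : ℝ) (hq0 : 0 < q) (hq1 : q < 1) :
    xMeta q ∈ Set.Ioo (-1 : ℝ) 0 ∧
    (∀ x ∈ Set.Ioo (-1 : ℝ) 0, x ≠ xMeta q → effX q x < effX q (xMeta q)) ∧
    effX q (xMeta q) = q ^ 2 / (1 + Real.sqrt (1 - q ^ 2)) ^ 2 := by
  set s := Real.sqrt (1 - q ^ 2)
  have hq2 : 0 < 1 - q ^ 2 := by nlinarith
  have hs : q ^ 2 + s ^ 2 = 1 := by rw [Real.sq_sqrt hq2.le]; ring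
  have hs0 : 0 < s := Real.sqrt_pos.mpr hq2
  have h1s : 1 + s ≠ 0 := by positivity
  have hmax : effX q (xMeta q) = q ^ 2 / (1 + s) ^ 2 := effX_neg_div_one_add hs h1s hs0.ne'
  refine ⟨neg_div_one_add_mem_Ioo hq0 hq1 hs0.le, fun x hx hne ↦ ?_, hmax⟩
  have hden : 0 < q * x + 1 := by nlinarith [hx.1, hx.2]
  exact hmax ▸ effX_lt_of_ne hs h1s hden hne
end
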